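/- Let n ≥ 1 be an integer and β ≥ n − 1/2, and define δ(r) = 1/(1 + β r^(n−1) Γ(r)) for r ≥ 1 with Γ as usual. Then the function r ↦ −(β − (n−1)/r)·δ(r)² is increasing on [1, ∞). Consequently, if (β² − β(n−1)/R)·δ(R)² = γ² for some R ≥ 1 and γ > 0, then (β² − β(n−1)/r)·δ(r)² ≤ γ² for all r ≥ R. -/

import Mathlib

noncomputable def Gam1 (n : ℕ) (r : ℝ) : ℝ :=
  if n = 1 then r - 1
  else if n = 2 then Real.log r
  else (1 / ((n : ℝ) - 2)) * (1 - r ^ ((2 : ℝ) - (n : ℝ)))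

noncomputable def del1 (n : ℕ) (β r : ℝ) : ℝ :=
  1 / (1 + β * r ^ ((n : ℝ) - 1) * Gam1 n r)

/-!
Write `c = n - 1`, `P(r) = r^c Γ(r)` and `D = 1 + β P`, so that `δ = 1/D`. Since `Γ' = r^(-c)`,
we get `P' = c P / r + 1`, and the derivative of `-(β - c/r) δ²` is
`δ³ (2 (β - c/r) β P' - c D / r²)`. For `r ≥ 1` we have `β - c/r ≥ 1/2`, so the bracket is at
least `β - c/r² + β c P (1/r - 1/r²) ≥ β - c ≥ 1/2`. The second claim follows by multiplying the
monotone function by `-β ≤ 0`.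
-/

open Set

lemma hasDerivAt_Gam1 (n : ℕ) {r : ℝ} (hr : 0 < r) :
    HasDerivAt (Gam1 n) (r ^ ((1 : ℝ) - n)) r := by
  unfold Gam1
  split_ifs with h1 h2
  · subst h1
    simpa using (hasDerivAt_id r).sub_const 1
  · subst h2
    convert Real.hasDerivAt_log hr.ne' using 1
    rw [show (1 : ℝ) - ((2 : ℕ) : ℝ) = -1 by norm_num, Real.rpow_neg_one]
  · have hn2 : (n : ℝ) - 2 ≠ 0 := sub_ne_zero.2 (by exact_mod_cast h2)
    refine (((hasDerivAt_const r 1).sub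
      (Real.hasDerivAt_rpow_const (p := 2 - n) (Or.inl hr.ne'))).const_mul
        (1 / ((n : ℝ) - 2))).congr_deriv ?_
    rw [show (2 : ℝ) - n - 1 = 1 - n by ring]
    field_simp
    ring

lemma Gam1_nonneg (n : ℕ) {r : ℝ} (hr : 1 ≤ r) : 0 ≤ Gam1 n r := by
  unfold Gam1
  split_ifs with h1 h2
  · linarith
  · exact Real.log_nonneg hr
  · rcases lt_or_gt_of_ne (show (n : ℝ) ≠ 2 by exact_mod_cast h2) with h | h
    · obtain rfl : n = 0 := by
        have : n < 2 := by exact_mod_cast h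
        omega
      norm_num
      nlinarith
    · exact mul_nonneg (by simp only [one_div, inv_nonneg]; linarith)
        (sub_nonneg.2 (Real.rpow_le_one_of_one_le_of_nonpos hr (by linarith)))

lemma hasDerivAt_rpow_mul_Gam1 (n : ℕ) {r : ℝ} (hr : 0 < r) :
    HasDerivAt (fun x => x ^ ((n : ℝ) - 1) * Gam1 n x)
      (((n : ℝ) - 1) * (r ^ ((n : ℝ) - 1) * Gam1 n r) / r + 1) r := by
  refine ((Real.hasDerivAt_rpow_const (p := (n : ℝ) - 1) (Or.inl hr.ne')).mul
    (hasDerivAt_Gam1 n hr)).congr_deriv ?_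
  rw [← Real.rpow_add hr, Real.rpow_sub_one hr.ne']
  norm_num
  ring

lemma one_add_mul_rpow_mul_Gam1_pos (n : ℕ) {β r : ℝ} (hβ : 0 ≤ β) (hr : 1 ≤ r) :
    0 < 1 + β * r ^ ((n : ℝ) - 1) * Gam1 n r := by
  have := Gam1_nonneg n hr
  positivity

lemma hasDerivAt_del1 (n : ℕ) {β r : ℝ} (hβ : 0 ≤ β) (hr : 1 ≤ r) :
    HasDerivAt (del1 n β)
      (-(β * (((n : ℝ) - 1) * (r ^ ((n : ℝ) - 1) * Gam1 n r) / r + 1)) * del1 n β r ^ 2)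
      r := by
  have h := (((hasDerivAt_rpow_mul_Gam1 n (by linarith)).const_mul β).const_add 1).inv
    (by simpa only [mul_assoc] using (one_add_mul_rpow_mul_Gam1_pos n hβ hr).ne')
  unfold del1
  simp_rw [one_div, mul_assoc]
  refine h.congr_deriv ?_
  field_simp

lemma div_sq_mul_one_add_lt_two_mul_sub_div_mul {c β r P : ℝ} (hc : 0 ≤ c)
    (hβ : c + 1 / 2 ≤ β) (hr : 1 ≤ r) (hP : 0 ≤ P) :
    c / r ^ 2 * (1 + β * P) < 2 * (β - c / r) * (β * (c * P / r + 1)) := by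
  have hcr : c / r ≤ c := div_le_self hc hr
  have hcr2 : c / r ^ 2 ≤ c / r := div_le_div_of_nonneg_left hc (by linarith) (by nlinarith)
  have hβ0 : 0 ≤ β := by linarith
  have hP' : 0 ≤ β * (c * P / r + 1) := by positivity
  calc c / r ^ 2 * (1 + β * P) = c / r ^ 2 + β * P * (c / r ^ 2) := by ring
    _ ≤ c + β * P * (c / r) := by gcongr; exact hcr2.trans hcr
    _ < β * (c * P / r + 1) := by
      linarith [show β * (c * P / r + 1) = β * P * (c / r) + β by ring]
    _ ≤ 2 * (β - c / r) * (β * (c * P / r + 1)) := le_mul_of_one_le_left hP' (by linarith)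

lemma hasDerivAt_neg_sub_div_mul_del1_sq (n : ℕ) {β r : ℝ} (hβ : 0 ≤ β) (hr : 1 ≤ r) :
    HasDerivAt (fun x : ℝ => -(β - ((n : ℝ) - 1) / x) * del1 n β x ^ 2)
      (del1 n β r ^ 3 *
        (2 * (β - ((n : ℝ) - 1) / r) *
            (β * (((n : ℝ) - 1) * (r ^ ((n : ℝ) - 1) * Gam1 n r) / r + 1))
          - ((n : ℝ) - 1) / r ^ 2 * (1 + β * (r ^ ((n : ℝ) - 1) * Gam1 n r)))) r := by
  have hr0 : r ≠ 0 := by positivity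
  have hu :
      HasDerivAt (fun x : ℝ => -(β - ((n : ℝ) - 1) / x)) (-(((n : ℝ) - 1) / r ^ 2)) r := by
    simpa only [div_eq_mul_inv, mul_neg, neg_neg] using
      (((hasDerivAt_inv hr0).const_mul ((n : ℝ) - 1)).const_sub β).fun_neg
  have hδ2 := (hasDerivAt_del1 n hβ hr).fun_pow 2
  refine (hu.mul hδ2).congr_deriv ?_
  have hδD : del1 n β r * (1 + β * (r ^ ((n : ℝ) - 1) * Gam1 n r)) = 1 := by
    rw [del1, ← mul_assoc, one_div_mul_cancel (one_add_mul_rpow_mul_Gam1_pos n hβ hr).ne']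
  linear_combination ((n : ℝ) - 1) / r ^ 2 * del1 n β r ^ 2 * hδD

lemma strictMonoOn_neg_sub_div_mul_del1_sq (n : ℕ) (hn : 1 ≤ n) {β : ℝ}
    (hβ : (n : ℝ) - 1 / 2 ≤ β) :
    StrictMonoOn (fun r : ℝ => -(β - ((n : ℝ) - 1) / r) * del1 n β r ^ 2) (Ici 1) := by
  have hn' : (1 : ℝ) ≤ n := by exact_mod_cast hn
  have hβ0 : 0 ≤ β := by linarith
  refine strictMonoOn_of_deriv_pos (convex_Ici 1)
    (fun r hr => (hasDerivAt_neg_sub_div_mul_del1_sq n hβ0 hr).continuousAt.continuousWithinAt)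
    fun r hr => ?_
  rw [interior_Ici] at hr
  have hr1 : 1 ≤ r := le_of_lt hr
  rw [(hasDerivAt_neg_sub_div_mul_del1_sq n hβ0 hr1).deriv]
  have hδ : 0 < del1 n β r := one_div_pos.2 (one_add_mul_rpow_mul_Gam1_pos n hβ0 hr1)
  have hP : 0 ≤ r ^ ((n : ℝ) - 1) * Gam1 n r :=
    mul_nonneg (Real.rpow_nonneg (by linarith) _) (Gam1_nonneg n hr1)
  exact mul_pos (pow_pos hδ 3) (sub_pos.2
    (div_sq_mul_one_add_lt_two_mul_sub_div_mul (by linarith) (by linarith) hr1 hP))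

theorem stmt_15_general (n : ℕ) (hn : 1 ≤ n) (β γ : ℝ) (hβ : (n : ℝ) - 1 / 2 ≤ β) :
    StrictMonoOn (fun r : ℝ => -(β - ((n : ℝ) - 1) / r) * del1 n β r ^ 2) (Set.Ici 1) ∧
      ∀ R : ℝ, 1 ≤ R →
        (β ^ 2 - β * ((n : ℝ) - 1) / R) * del1 n β R ^ 2 = γ ^ 2 →
        ∀ r : ℝ, R ≤ r →
          (β ^ 2 - β * ((n : ℝ) - 1) / r) * del1 n β r ^ 2 ≤ γ ^ 2 := by
  have hmono := strictMonoOn_neg_sub_div_mul_del1_sq n hn hβ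
  refine ⟨hmono, fun R hR hRγ r hRr => ?_⟩
  have hβ0 : 0 ≤ β := by linarith [show (1 : ℝ) ≤ n by exact_mod_cast hn]
  have hle := mul_le_mul_of_nonneg_left (hmono.monotoneOn hR (hR.trans hRr) hRr) hβ0
  rw [← hRγ]
  linear_combination hle

theorem stmt_15 (n : ℕ) (hn : 1 ≤ n) (β γ : ℝ) (hβ : (n : ℝ) - 1 / 2 ≤ β) (hγ : 0 < γ) :
    StrictMonoOn (fun r : ℝ => -(β - ((n : ℝ) - 1) / r) * del1 n β r ^ 2) (Set.Ici 1) ∧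
      ∀ R : ℝ, 1 ≤ R →
        (β ^ 2 - β * ((n : ℝ) - 1) / R) * del1 n β R ^ 2 = γ ^ 2 →
        ∀ r : ℝ, R ≤ r →
          (β ^ 2 - β * ((n : ℝ) - 1) / r) * del1 n β r ^ 2 ≤ γ ^ 2 :=
  stmt_15_general n hn β γ hβ
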